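/- arXiv:1212.5517 — 4 statements merged into one kernel-verified Lean document; each statement's English description precedes it below -/
import Mathlib

section
/- The function f(x) = exp(x²/2) Φ(x) is strictly increasing on ℝ. -/
/-!
Writing `c = (√(2π))⁻¹` and `I(x) = ∫_{-∞}^x e^{-y²/2} dy`, the derivative of
`f = e^{x²/2} Φ` is `c (1 + x e^{x²/2} I(x))`. It is positive because of the Mills-ratio bound
`-x I(x) < e^{-x²/2}`, which holds for every `x`: the right-hand side is
`∫_{-∞}^x (-y) e^{-y²/2} dy`, and `-y > -x` on `(-∞, x)`.
-/

open Real

noncomputable def Phi (x : ℝ) : ℝ :=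
  (Real.sqrt (2 * Real.pi))⁻¹ * ∫ y in Set.Iic x, Real.exp (-y ^ 2 / 2)

open MeasureTheory Set Filter

lemma integrable_exp_neg_sq_div_two : Integrable fun y : ℝ => exp (-y ^ 2 / 2) := by
  convert integrable_exp_neg_mul_sq (by norm_num : (0 : ℝ) < 1 / 2) using 2 with y
  ring_nf

lemma integrable_neg_mul_exp_neg_sq_div_two : Integrable fun y : ℝ => -y * exp (-y ^ 2 / 2) := by
  convert (integrable_mul_exp_neg_mul_sq (by norm_num : (0 : ℝ) < 1 / 2)).neg using 1
  ext y
  simp only [Pi.neg_apply]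
  ring_nf

lemma hasDerivAt_exp_neg_sq_div_two (x : ℝ) :
    HasDerivAt (fun y : ℝ => exp (-y ^ 2 / 2)) (-x * exp (-x ^ 2 / 2)) x := by
  convert ((hasDerivAt_pow 2 x).neg.div_const 2).exp using 1
  · ext y
    simp only [Pi.neg_apply]
  · simp only [Pi.neg_apply, Nat.cast_ofNat, Nat.add_one_sub_one, pow_one]
    ring

lemma hasDerivAt_exp_sq_div_two (x : ℝ) :
    HasDerivAt (fun y : ℝ => exp (y ^ 2 / 2)) (x * exp (x ^ 2 / 2)) x := by
  convert ((hasDerivAt_pow 2 x).div_const 2).exp using 1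
  simp only [Nat.cast_ofNat, Nat.add_one_sub_one, pow_one]
  ring

lemma hasDerivAt_Phi (x : ℝ) :
    HasDerivAt Phi ((√(2 * π))⁻¹ * exp (-x ^ 2 / 2)) x := by
  have hint := integrable_exp_neg_sq_div_two
  have hcont : Continuous fun y : ℝ => exp (-y ^ 2 / 2) := by fun_prop
  have hsplit : ∀ t, Phi t = (√(2 * π))⁻¹ *
      ((∫ y in Iic 0, exp (-y ^ 2 / 2)) + ∫ y in (0 : ℝ)..t, exp (-y ^ 2 / 2)) := fun t => by
    rw [Phi, ← intervalIntegral.integral_Iic_sub_Iic hint.integrableOn hint.integrableOn]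
    ring
  rw [funext hsplit]
  exact ((intervalIntegral.integral_hasDerivAt_right hint.intervalIntegrable
    hcont.stronglyMeasurable.stronglyMeasurableAtFilter hcont.continuousAt).const_add _).const_mul _

lemma tendsto_exp_neg_sq_div_two_atBot :
    Tendsto (fun y : ℝ => exp (-y ^ 2 / 2)) atBot (nhds 0) := by
  refine tendsto_exp_atBot.comp (Tendsto.atBot_div_const (by norm_num) ?_)
  have hsq : Tendsto (fun y : ℝ => y ^ 2) atBot atTop := by
    simpa only [Function.comp_def, neg_sq] using
      (tendsto_pow_atTop (α := ℝ) two_ne_zero).comp tendsto_neg_atBot_atTop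
  exact tendsto_neg_atTop_atBot.comp hsq

lemma integral_Iic_neg_mul_exp_neg_sq_div_two (x : ℝ) :
    ∫ y in Iic x, -y * exp (-y ^ 2 / 2) = exp (-x ^ 2 / 2) := by
  simpa using integral_Iic_of_hasDerivAt_of_tendsto' (fun y _ => hasDerivAt_exp_neg_sq_div_two y)
    integrable_neg_mul_exp_neg_sq_div_two.integrableOn tendsto_exp_neg_sq_div_two_atBot

lemma neg_mul_integral_Iic_exp_neg_sq_div_two_lt (x : ℝ) :
    -x * ∫ y in Iic x, exp (-y ^ 2 / 2) < exp (-x ^ 2 / 2) := by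
  set g : ℝ → ℝ := fun y => -y * exp (-y ^ 2 / 2) - -x * exp (-y ^ 2 / 2)
  have hg_int : Integrable g :=
    integrable_neg_mul_exp_neg_sq_div_two.sub (integrable_exp_neg_sq_div_two.const_mul _)
  have hg_eq : ∀ y, g y = (x - y) * exp (-y ^ 2 / 2) := fun y => by ring
  have hg_pos : ∀ y < x, 0 < g y := fun y hy => hg_eq y ▸ mul_pos (by linarith) (exp_pos _)
  have hg_nonneg : ∀ y ≤ x, 0 ≤ g y := fun y hy =>
    hg_eq y ▸ mul_nonneg (by linarith) (exp_pos _).le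
  have hint_pos : 0 < ∫ y in Iic x, g y := by
    rw [setIntegral_pos_iff_support_of_nonneg_ae _ hg_int.integrableOn]
    · calc 0 < volume (Iio x) := by simp
        _ ≤ volume (Function.support g ∩ Iic x) :=
          measure_mono fun y (hy : y < x) => ⟨(hg_pos y hy).ne', hy.le⟩
    · filter_upwards [ae_restrict_mem measurableSet_Iic] with y hy using hg_nonneg y hy
  rw [integral_sub integrable_neg_mul_exp_neg_sq_div_two.integrableOn
    (integrable_exp_neg_sq_div_two.const_mul _).integrableOn, integral_const_mul,
    integral_Iic_neg_mul_exp_neg_sq_div_two] at hint_pos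
  linarith

/-- The function `f(x) = exp(x²/2) Φ(x)` is strictly increasing on ℝ. -/
theorem f_strictMono : StrictMono (fun x : ℝ => Real.exp (x ^ 2 / 2) * Phi x) := by
  refine strictMono_of_hasDerivAt_pos
    (fun x => (hasDerivAt_exp_sq_div_two x).mul (hasDerivAt_Phi x)) fun x => ?_
  have hmills : -x * (∫ y in Iic x, exp (-y ^ 2 / 2)) * exp (x ^ 2 / 2) < 1 := by
    calc -x * (∫ y in Iic x, exp (-y ^ 2 / 2)) * exp (x ^ 2 / 2)
        < exp (-x ^ 2 / 2) * exp (x ^ 2 / 2) :=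
          mul_lt_mul_of_pos_right (neg_mul_integral_Iic_exp_neg_sq_div_two_lt x) (exp_pos _)
      _ = 1 := by rw [← exp_add, neg_div, neg_add_cancel, exp_zero]
  have hderiv : x * exp (x ^ 2 / 2) * Phi x + exp (x ^ 2 / 2) * ((√(2 * π))⁻¹ * exp (-x ^ 2 / 2))
      = (√(2 * π))⁻¹ * (1 - -x * (∫ y in Iic x, exp (-y ^ 2 / 2)) * exp (x ^ 2 / 2)) := by
    rw [Phi, mul_left_comm (exp _), ← exp_add, neg_div, add_neg_cancel, exp_zero]
    ring
  rw [hderiv]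
  exact mul_pos (by positivity) (sub_pos.mpr hmills)
end

section
/- For every ℓ > 0, every a ∈ (0,∞), and every b ∈ ℝ, the sign of Γ(a,b,ℓ) − 2𝒢(a,b,ℓ) equals the sign of a − b; that is, Γ(a,b,ℓ) > 2𝒢(a,b,ℓ) iff a > b, Γ(a,b,ℓ) = 2𝒢(a,b,ℓ) iff a = b, and Γ(a,b,ℓ) < 2𝒢(a,b,ℓ) iff a < b. -/
open Real

/-- `Γ(a,b,ℓ)` for `a > 0`. -/
noncomputable def Gam (a b ℓ : ℝ) : ℝ :=
  ℓ ^ 2 * Phi (-(ℓ * b) / (2 * Real.sqrt a)) +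
    ℓ ^ 2 * Real.exp (ℓ ^ 2 * (a - b) / 2) * Phi (ℓ * (b / (2 * Real.sqrt a) - Real.sqrt a))

/-- `𝒢(a,b,ℓ)` for `a > 0`. -/
noncomputable def calG (a b ℓ : ℝ) : ℝ :=
  ℓ ^ 2 * Real.exp (ℓ ^ 2 * (a - b) / 2) * Phi (ℓ * (b / (2 * Real.sqrt a) - Real.sqrt a))

/-!
Write `X = -ℓb/(2√a)` and `Y = ℓ(b/(2√a) - √a)`, so that `X - Y = ℓ(a - b)/√a`. The key identity
factors `Γ - 2𝒢` as `ℓ² exp(-ℓ²b²/(8a)) (f X - f Y)` with `f x = exp(x²/2) Φ(x)`, so it suffices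
that `f` is strictly increasing. Translating the Gaussian integral by `x` gives
`f x = (2π)^(-1/2) ∫_{t ≤ 0} exp(-t²/2 - x t) dt`, and for `t < 0` the integrand is strictly
increasing in `x`.
-/

open MeasureTheory Set

theorem StrictMono.sign_sub {α β : Type*} [AddCommGroup α] [LinearOrder α] [IsOrderedAddMonoid α]
    [AddCommGroup β] [LinearOrder β] [IsOrderedAddMonoid β] {f : α → β} (hf : StrictMono f)
    (x y : α) : SignType.sign (f x - f y) = SignType.sign (x - y) := by
  rcases lt_trichotomy x y with h | rfl | h
  · rw [sign_neg (sub_neg.2 h), sign_neg (sub_neg.2 (hf h))]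
  · simp
  · rw [sign_pos (sub_pos.2 h), sign_pos (sub_pos.2 (hf h))]

theorem lt_iff_and_eq_iff_and_lt_iff_of_sign_sub_eq {α β : Type*} [AddCommGroup α]
    [LinearOrder α] [IsOrderedAddMonoid α] [AddCommGroup β] [LinearOrder β] [IsOrderedAddMonoid β]
    {u v : α} {p q : β} (h : SignType.sign (u - v) = SignType.sign (p - q)) :
    (v < u ↔ q < p) ∧ (u = v ↔ p = q) ∧ (u < v ↔ p < q) := by
  refine ⟨?_, ?_, ?_⟩
  · rw [← sub_pos, ← sign_eq_one_iff, h, sign_eq_one_iff, sub_pos]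
  · rw [← sub_eq_zero (a := u), ← _root_.sign_eq_zero_iff, h, _root_.sign_eq_zero_iff, sub_eq_zero]
  · rw [← sub_neg, ← sign_eq_neg_one_iff, h, sign_eq_neg_one_iff, sub_neg]

theorem integrable_exp_neg_sq_div_two_sub_mul (x : ℝ) :
    Integrable fun t : ℝ => exp (-t ^ 2 / 2 - x * t) := by
  refine (((integrable_exp_neg_mul_sq (b := 1 / 2) (by norm_num)).comp_add_right x).const_mul
    (exp (x ^ 2 / 2))).congr (ae_of_all _ fun t => ?_)
  simp only [← exp_add]
  ring_nf

theorem exp_sq_div_two_mul_integral_Iic (x : ℝ) :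
    exp (x ^ 2 / 2) * ∫ t in Iic x, exp (-t ^ 2 / 2) = ∫ t in Iic 0, exp (-t ^ 2 / 2 - x * t) := by
  rw [← (measurePreserving_add_right volume x).setIntegral_preimage_emb
    (measurableEmbedding_addRight x), preimage_add_const_Iic, sub_self, ← integral_const_mul]
  congr 1 with t
  rw [← exp_add]
  ring_nf

theorem strictMono_integral_Iic_exp_neg_sq_div_two_sub_mul :
    StrictMono fun x : ℝ => ∫ t in Iic 0, exp (-t ^ 2 / 2 - x * t) := by
  intro y x hyx
  set g : ℝ → ℝ := fun t => exp (-t ^ 2 / 2 - x * t) - exp (-t ^ 2 / 2 - y * t)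
  have hg_nonneg : 0 ≤ᵐ[volume.restrict (Iic 0)] g := by
    filter_upwards [ae_restrict_mem measurableSet_Iic] with t ht
    exact sub_nonneg.2 (exp_le_exp.2 (by nlinarith [mem_Iic.1 ht]))
  have hg_support : Iio 0 ⊆ Function.support g ∩ Iic 0 := fun t ht =>
    ⟨(sub_pos.2 (exp_lt_exp.2 (by nlinarith [mem_Iio.1 ht]))).ne', Iio_subset_Iic_self ht⟩
  have hg_int : Integrable g :=
    (integrable_exp_neg_sq_div_two_sub_mul x).sub (integrable_exp_neg_sq_div_two_sub_mul y)
  rw [← sub_pos, ← integral_sub (integrable_exp_neg_sq_div_two_sub_mul x).integrableOn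
    (integrable_exp_neg_sq_div_two_sub_mul y).integrableOn,
    setIntegral_pos_iff_support_of_nonneg_ae hg_nonneg hg_int.integrableOn]
  calc (0 : ENNReal) < volume (Iio (0 : ℝ)) := by simp
    _ ≤ volume (Function.support g ∩ Iic 0) := measure_mono hg_support

/-- The function `f` of the key identity; `√(2π) * scaledPhi x` is Mills' ratio at `-x`. -/
noncomputable def scaledPhi (x : ℝ) : ℝ := exp (x ^ 2 / 2) * Phi x

theorem scaledPhi_eq (x : ℝ) :
    scaledPhi x = (√(2 * π))⁻¹ * ∫ t in Iic 0, exp (-t ^ 2 / 2 - x * t) := by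
  rw [scaledPhi, Phi, mul_left_comm, exp_sq_div_two_mul_integral_Iic]

theorem strictMono_scaledPhi : StrictMono scaledPhi := by
  rw [show scaledPhi = _ from funext scaledPhi_eq]
  exact strictMono_integral_Iic_exp_neg_sq_div_two_sub_mul.const_mul (by positivity)

theorem Gam_sub_two_mul_calG (ℓ b : ℝ) {a : ℝ} (ha : 0 < a) :
    Gam a b ℓ - 2 * calG a b ℓ = ℓ ^ 2 * exp (-(ℓ ^ 2 * b ^ 2 / (8 * a))) *
      (scaledPhi (-(ℓ * b) / (2 * √a)) - scaledPhi (ℓ * (b / (2 * √a) - √a))) := by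
  obtain ⟨s, hs, rfl⟩ : ∃ s, 0 < s ∧ a = s ^ 2 := ⟨√a, sqrt_pos.2 ha, (sq_sqrt ha.le).symm⟩
  unfold Gam calG scaledPhi
  rw [sqrt_sq hs.le]
  have hX : exp (-(ℓ ^ 2 * b ^ 2 / (8 * s ^ 2))) * exp ((-(ℓ * b) / (2 * s)) ^ 2 / 2) = 1 := by
    rw [← exp_add, ← exp_zero]
    congr 1
    field_simp
    ring
  have hY : exp (-(ℓ ^ 2 * b ^ 2 / (8 * s ^ 2))) * exp ((ℓ * (b / (2 * s) - s)) ^ 2 / 2) =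
      exp (ℓ ^ 2 * (s ^ 2 - b) / 2) := by
    rw [← exp_add]
    congr 1
    field_simp
    ring
  linear_combination (-(ℓ ^ 2 * Phi (-(ℓ * b) / (2 * s)))) * hX +
    (ℓ ^ 2 * Phi (ℓ * (b / (2 * s) - s))) * hY

/-- The sign of `Γ(a,b,ℓ) − 2𝒢(a,b,ℓ)` equals the sign of `a − b`. -/
theorem sign_Gamma_sub_two_calG (ℓ a b : ℝ) (hℓ : 0 < ℓ) (ha : 0 < a) :
    (2 * calG a b ℓ < Gam a b ℓ ↔ b < a) ∧
    (Gam a b ℓ = 2 * calG a b ℓ ↔ a = b) ∧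
    (Gam a b ℓ < 2 * calG a b ℓ ↔ a < b) := by
  have hs : 0 < √a := sqrt_pos.2 ha
  have hXY : -(ℓ * b) / (2 * √a) - ℓ * (b / (2 * √a) - √a) = ℓ / √a * (a - b) := by
    field_simp
    rw [sq_sqrt ha.le]
    ring
  apply lt_iff_and_eq_iff_and_lt_iff_of_sign_sub_eq
  rw [Gam_sub_two_mul_calG ℓ b ha, sign_mul, sign_pos (by positivity), one_mul,
    strictMono_scaledPhi.sign_sub, hXY, sign_mul, sign_pos (by positivity), one_mul]
end

section
/- Fix s > 0 and let J(s,ℓ) = Φ(−ℓ/(2√s)) + exp(ℓ²(s−1)/2) Φ(ℓ(1/(2√s) − √s)). Then J(s,0⁺) = 1 and lim_{ℓ→∞} J(s,ℓ) = 0; consequently, for every α ∈ (0,1) there exists a unique ℓ^α(s) > 0 such that J(s, ℓ^α(s)) = α. -/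
open Real Set Filter Topology

noncomputable def J (s ℓ : ℝ) : ℝ :=
  Phi (-ℓ / (2 * Real.sqrt s)) +
    Real.exp (ℓ ^ 2 * (s - 1) / 2) * Phi (ℓ * (1 / (2 * Real.sqrt s) - Real.sqrt s))

/-!
Write `φ` for the standard normal density. Since `c² = 1/(4s) - 1 + s` for
`c = 1/(2√s) - √s`, one has `exp(ℓ²(s-1)/2) φ(cℓ) = φ(ℓ/(2√s))`, and this identity collapses the
derivative of `J s` to `(s-1) ℓ exp(ℓ²(s-1)/2) Φ(cℓ) - √s φ(ℓ/(2√s))`. For `ℓ > 0` this is negative: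
trivially if `s ≤ 1`, and by Mills' inequality `Φ(-t) ≤ φ(t)/t` (here `c < 0`) if `s > 1`.
The same bound for `s > 1/2`, and the decay of `exp(ℓ²(s-1)/2)` for `s ≤ 1/2`, give `J s ℓ → 0`;
the root is then produced by the intermediate value theorem and is unique by strict monotonicity.
-/

open MeasureTheory ProbabilityTheory

local notation "φ" => gaussianPDFReal 0 1

lemma gaussianPDFReal_zero_one : φ = fun x => (√(2 * π))⁻¹ * exp (-x ^ 2 / 2) := by
  ext x; simp [gaussianPDFReal]

lemma gaussianPDFReal_zero_one_neg (x : ℝ) : φ (-x) = φ x := by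
  simp only [gaussianPDFReal_zero_one, neg_sq]

lemma hasDerivAt_gaussianPDFReal_zero_one (x : ℝ) : HasDerivAt φ (-x * φ x) x := by
  have h : HasDerivAt (fun y : ℝ => -y ^ 2 / 2) (-x) x :=
    (((hasDerivAt_pow 2 x).neg).div_const 2).congr_deriv (by ring)
  rw [gaussianPDFReal_zero_one]
  exact (h.exp.const_mul (√(2 * π))⁻¹).congr_deriv (by ring)

lemma tendsto_gaussianPDFReal_zero_one_atBot : Tendsto φ atBot (𝓝 0) := by
  have h : Tendsto (fun y : ℝ => -y ^ 2 / 2) atBot atBot :=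
    (tendsto_neg_atTop_atBot.comp (tendsto_pow_atTop two_ne_zero |>.comp tendsto_neg_atBot_atTop)
      |>.atBot_div_const two_pos).congr fun y => by simp [neg_div]
  rw [gaussianPDFReal_zero_one]
  simpa using (tendsto_exp_atBot.comp h).const_mul (√(2 * π))⁻¹

lemma Phi_eq_integral (x : ℝ) : Phi x = ∫ y in Iic x, φ y := by
  simp only [Phi, gaussianPDFReal_zero_one, integral_const_mul]

lemma Phi_eq_cdf (x : ℝ) : Phi x = cdf (gaussianReal 0 1) x := by
  rw [cdf_eq_real, measureReal_def, gaussianReal_apply_eq_integral 0 one_ne_zero,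
    ENNReal.toReal_ofReal (setIntegral_nonneg measurableSet_Iic fun y _ =>
      gaussianPDFReal_nonneg 0 1 y), Phi_eq_integral]

lemma Phi_nonneg (x : ℝ) : 0 ≤ Phi x :=
  Phi_eq_cdf x ▸ cdf_nonneg _ x

lemma Phi_le_one (x : ℝ) : Phi x ≤ 1 :=
  Phi_eq_cdf x ▸ cdf_le_one _ x

lemma Phi_zero : Phi 0 = 1 / 2 := by
  have hsymm : ∫ y in Iic 0, φ y = ∫ y in Ioi 0, φ y := by
    rw [← neg_zero, ← integral_comp_neg_Ioi, neg_zero]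
    simp only [gaussianPDFReal_zero_one_neg]
  have hsplit := intervalIntegral.integral_Iic_add_Ioi (b := 0)
    (integrable_gaussianPDFReal 0 1).integrableOn (integrable_gaussianPDFReal 0 1).integrableOn
  rw [integral_gaussianPDFReal_eq_one 0 one_ne_zero, ← hsymm] at hsplit
  rw [Phi_eq_integral]
  linarith

lemma hasDerivAt_Phi_s10 (x : ℝ) : HasDerivAt Phi (φ x) x := by
  have hint : Integrable φ := integrable_gaussianPDFReal 0 1
  have hcont : Continuous φ := by rw [gaussianPDFReal_zero_one]; fun_prop
  have h := intervalIntegral.integral_hasDerivAt_right (a := 0) (b := x) hint.intervalIntegrable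
    (hcont.stronglyMeasurableAtFilter _ _) hcont.continuousAt
  refine (h.const_add (Phi 0)).congr_of_eventuallyEq (Eventually.of_forall fun y => ?_)
  simp only [Phi_eq_integral,
    ← intervalIntegral.integral_Iic_sub_Iic hint.integrableOn hint.integrableOn]
  ring

lemma integrable_neg_mul_gaussianPDFReal_zero_one : Integrable fun y => -y * φ y := by
  rw [gaussianPDFReal_zero_one]
  convert (integrable_mul_exp_neg_mul_sq (b := 1 / 2) one_half_pos).const_mul (-(√(2 * π))⁻¹)
    using 2 with y
  ring_nf

lemma integral_Iic_neg_mul_gaussianPDFReal_zero_one (a : ℝ) : ∫ y in Iic a, -y * φ y = φ a := by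
  simpa using integral_Iic_of_hasDerivAt_of_tendsto'
    (fun y _ => hasDerivAt_gaussianPDFReal_zero_one y)
    integrable_neg_mul_gaussianPDFReal_zero_one.integrableOn
    tendsto_gaussianPDFReal_zero_one_atBot

lemma Phi_neg_le {t : ℝ} (ht : 0 < t) : Phi (-t) ≤ φ t / t := by
  calc Phi (-t) = ∫ y in Iic (-t), φ y := Phi_eq_integral _
    _ ≤ ∫ y in Iic (-t), t⁻¹ * (-y * φ y) := by
      refine setIntegral_mono_on (integrable_gaussianPDFReal 0 1).integrableOn ?_ measurableSet_Iic
        fun y (hy : y ≤ -t) => ?_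
      · exact (integrable_neg_mul_gaussianPDFReal_zero_one.const_mul t⁻¹).integrableOn
      · have : 1 ≤ t⁻¹ * -y := by rw [inv_mul_eq_div, le_div_iff₀ ht]; linarith
        nlinarith [gaussianPDFReal_nonneg 0 1 y]
    _ = φ t / t := by
      rw [integral_const_mul, integral_Iic_neg_mul_gaussianPDFReal_zero_one,
        gaussianPDFReal_zero_one_neg]
      ring

lemma J_zero (s : ℝ) : J s 0 = 1 := by
  norm_num [J, Phi_zero]

section J

variable {s : ℝ}

lemma exp_mul_gaussianPDFReal_zero_one (hs : 0 < s) (ℓ : ℝ) :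
    exp (ℓ ^ 2 * (s - 1) / 2) * φ (ℓ * (1 / (2 * √s) - √s)) = φ (ℓ / (2 * √s)) := by
  simp only [gaussianPDFReal_zero_one]
  rw [mul_left_comm, ← exp_add]
  congr 2
  field_simp
  rw [sq_sqrt hs.le]
  ring

lemma sqrt_sub_one_div_two_sqrt_pos (hs : 1 / 2 < s) : 0 < √s - 1 / (2 * √s) := by
  have hss : 0 < √s := sqrt_pos.2 (by linarith)
  rw [sub_pos, div_lt_iff₀ (by positivity)]
  nlinarith [mul_self_sqrt (show 0 ≤ s by linarith)]

lemma exp_mul_Phi_le (hs : 1 / 2 < s) {ℓ : ℝ} (hℓ : 0 < ℓ) :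
    exp (ℓ ^ 2 * (s - 1) / 2) * Phi (ℓ * (1 / (2 * √s) - √s)) ≤
      φ (ℓ / (2 * √s)) / (ℓ * (√s - 1 / (2 * √s))) := by
  have ht : 0 < ℓ * (√s - 1 / (2 * √s)) := mul_pos hℓ (sqrt_sub_one_div_two_sqrt_pos hs)
  have harg : ℓ * (1 / (2 * √s) - √s) = -(ℓ * (√s - 1 / (2 * √s))) := by ring
  calc exp (ℓ ^ 2 * (s - 1) / 2) * Phi (ℓ * (1 / (2 * √s) - √s))
      ≤ exp (ℓ ^ 2 * (s - 1) / 2) *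
          (φ (ℓ * (√s - 1 / (2 * √s))) / (ℓ * (√s - 1 / (2 * √s)))) := by
        rw [harg]; gcongr; exact Phi_neg_le ht
    _ = φ (ℓ / (2 * √s)) / (ℓ * (√s - 1 / (2 * √s))) := by
        rw [← exp_mul_gaussianPDFReal_zero_one (by linarith) ℓ, harg, gaussianPDFReal_zero_one_neg,
          mul_div_assoc']

lemma hasDerivAt_J (hs : 0 < s) (ℓ : ℝ) :
    HasDerivAt (J s) ((s - 1) * ℓ * (exp (ℓ ^ 2 * (s - 1) / 2) * Phi (ℓ * (1 / (2 * √s) - √s)))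
      - √s * φ (ℓ / (2 * √s))) ℓ := by
  have h₁ := (hasDerivAt_Phi_s10 _).comp ℓ (((hasDerivAt_id ℓ).neg).div_const (2 * √s))
  have h₂ := ((((hasDerivAt_pow 2 ℓ).mul_const (s - 1)).div_const 2).exp).mul
    ((hasDerivAt_Phi_s10 _).comp ℓ ((hasDerivAt_id ℓ).mul_const (1 / (2 * √s) - √s)))
  refine (h₁.add h₂).congr_deriv ?_
  simp only [Function.comp_apply, Pi.neg_apply, id, neg_div, gaussianPDFReal_zero_one_neg]
  linear_combination (1 / (2 * √s) - √s) * exp_mul_gaussianPDFReal_zero_one hs ℓ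

lemma continuous_J (hs : 0 < s) : Continuous (J s) :=
  continuous_iff_continuousAt.2 fun ℓ => (hasDerivAt_J hs ℓ).continuousAt

lemma strictAntiOn_J (hs : 0 < s) : StrictAntiOn (J s) (Ici 0) := by
  refine strictAntiOn_of_deriv_neg (convex_Ici 0) (continuous_J hs).continuousOn fun ℓ hℓ => ?_
  rw [interior_Ici, mem_Ioi] at hℓ
  rw [(hasDerivAt_J hs ℓ).deriv, sub_neg]
  have hφ : 0 < φ (ℓ / (2 * √s)) := gaussianPDFReal_pos _ _ _ one_ne_zero
  have hss : 0 < √s := sqrt_pos.2 hs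
  rcases le_or_gt s 1 with hs1 | hs1
  · have hE : 0 ≤ exp (ℓ ^ 2 * (s - 1) / 2) * Phi (ℓ * (1 / (2 * √s) - √s)) :=
      mul_nonneg (exp_pos _).le (Phi_nonneg _)
    have : (s - 1) * ℓ ≤ 0 := mul_nonpos_of_nonpos_of_nonneg (by linarith) hℓ.le
    nlinarith [mul_pos hss hφ]
  · have hgap : √s * (√s - 1 / (2 * √s)) = s - 1 / 2 := by
      field_simp; rw [sq_sqrt hs.le]; ring
    have hg := sqrt_sub_one_div_two_sqrt_pos (show 1 / 2 < s by linarith)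
    calc (s - 1) * ℓ * (exp (ℓ ^ 2 * (s - 1) / 2) * Phi (ℓ * (1 / (2 * √s) - √s)))
        ≤ (s - 1) * ℓ * (φ (ℓ / (2 * √s)) / (ℓ * (√s - 1 / (2 * √s)))) := by
          gcongr
          exact exp_mul_Phi_le (by linarith) hℓ
      _ = (s - 1) / (√s - 1 / (2 * √s)) * φ (ℓ / (2 * √s)) := by field_simp
      _ < √s * φ (ℓ / (2 * √s)) := by
          gcongr
          rw [div_lt_iff₀ hg]
          linarith

lemma tendsto_J_atTop (hs : 0 < s) : Tendsto (J s) atTop (𝓝 0) := by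
  have hlin : Tendsto (fun ℓ : ℝ => -ℓ / (2 * √s)) atTop atBot :=
    tendsto_neg_atTop_atBot.atBot_div_const (by positivity)
  have h₁ : Tendsto (fun ℓ => Phi (-ℓ / (2 * √s))) atTop (𝓝 0) := by
    simpa only [Function.comp_def, ← Phi_eq_cdf] using
      (tendsto_cdf_atBot (μ := gaussianReal 0 1)).comp hlin
  have h₂ : Tendsto (fun ℓ => exp (ℓ ^ 2 * (s - 1) / 2) * Phi (ℓ * (1 / (2 * √s) - √s)))
      atTop (𝓝 0) := by
    have hnonneg (ℓ : ℝ) : 0 ≤ exp (ℓ ^ 2 * (s - 1) / 2) * Phi (ℓ * (1 / (2 * √s) - √s)) :=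
      mul_nonneg (exp_pos _).le (Phi_nonneg _)
    rcases le_or_gt s (1 / 2) with hs' | hs'
    · have hexp : Tendsto (fun ℓ : ℝ => exp (ℓ ^ 2 * (s - 1) / 2)) atTop (𝓝 0) :=
        tendsto_exp_atBot.comp (((tendsto_pow_atTop two_ne_zero).atTop_mul_const_of_neg
          (by linarith)).atBot_div_const two_pos)
      exact squeeze_zero hnonneg
        (fun ℓ => mul_le_of_le_one_right (exp_pos _).le (Phi_le_one _)) hexp
    · refine squeeze_zero' (Eventually.of_forall hnonneg)
        ((eventually_gt_atTop 0).mono fun ℓ hℓ => exp_mul_Phi_le hs' hℓ) ?_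
      refine Tendsto.div_atTop (a := 0) ?_
        (tendsto_id.atTop_mul_const (sqrt_sub_one_div_two_sqrt_pos hs'))
      simpa only [Function.comp_def, neg_div, gaussianPDFReal_zero_one_neg] using
        tendsto_gaussianPDFReal_zero_one_atBot.comp hlin
  rw [← add_zero 0]
  exact h₁.add h₂

end J

lemma existsUnique_pos_eq_of_strictAntiOn {f : ℝ → ℝ} {b α : ℝ} (hf : ContinuousOn f (Ici 0))
    (hanti : StrictAntiOn f (Ici 0)) (hlim : Tendsto f atTop (𝓝 b)) (hα : α ∈ Ioo b (f 0)) :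
    ∃! x, 0 < x ∧ f x = α := by
  obtain ⟨M, hM, hM0⟩ := ((hlim.eventually_lt_const hα.1).and (eventually_ge_atTop 0)).exists
  obtain ⟨x, hx, rfl⟩ := intermediate_value_Ioc' hM0 (hf.mono Icc_subset_Ici_self) ⟨hM.le, hα.2⟩
  exact ⟨x, ⟨hx.1, rfl⟩, fun y ⟨hy, hfy⟩ => hanti.injOn hy.le hx.1.le hfy⟩

/-- `J(s,0) = 1`, `lim_{ℓ→∞} J(s,ℓ) = 0`, and for every `α ∈ (0,1)` there is a unique `ℓ > 0`
with `J(s,ℓ) = α`. -/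
theorem J_limits_and_unique_root (s : ℝ) (hs : 0 < s) :
    J s 0 = 1 ∧
    Tendsto (fun ℓ => J s ℓ) atTop (𝓝 0) ∧
    ∀ α : ℝ, α ∈ Set.Ioo (0 : ℝ) 1 → ∃! ℓ : ℝ, 0 < ℓ ∧ J s ℓ = α :=
  ⟨J_zero s, tendsto_J_atTop hs, fun _ hα => existsUnique_pos_eq_of_strictAntiOn
    (continuous_J hs).continuousOn (strictAntiOn_J hs) (tendsto_J_atTop hs) (J_zero s ▸ hα)⟩
end

section
/- Let Q(s,y) = y² − 4(1/(1−s) + s)y + 48s/(1−s) for s ∈ (0,1)∪(1,∞) with discriminant Δ(s) = (16/(1−s)²)(s²(1−s)² − 10s(1−s) + 1). When Δ(s) > 0, the roots y_± satisfy: y_− < 2/(1−s) if and only if s(1−s) < 1/10; moreover for s > 1 one has y_− < 2/(1−s) < 0 < y_+, and for s ∈ (0,1) with s(1−s) < 1/10 one has 0 < y_− < 2/(1−s) < y_+. -/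
open Real Set

set_option maxHeartbeats 1000000

/-- Root locations for `Q(s,y) = y² − 4(1/(1−s) + s)y + 48s/(1−s)` when its discriminant
`Δ(s) = (16/(1−s)²)(s²(1−s)² − 10s(1−s) + 1)` is positive, with roots
`y_± = 2(1/(1−s)+s) ± (2/|1−s|)√(s²(1−s)² − 10s(1−s) + 1)`. -/
theorem Q_root_locations (s : ℝ) (hs0 : 0 < s) (hs1 : s ≠ 1)
    (hΔ : 0 < 16 / (1 - s) ^ 2 * (s ^ 2 * (1 - s) ^ 2 - 10 * (s * (1 - s)) + 1)) :
    letI D : ℝ := Real.sqrt (s ^ 2 * (1 - s) ^ 2 - 10 * (s * (1 - s)) + 1)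
    letI yminus : ℝ := 2 * (1 / (1 - s) + s) - 2 / |1 - s| * D
    letI yplus : ℝ := 2 * (1 / (1 - s) + s) + 2 / |1 - s| * D
    (yminus < 2 / (1 - s) ↔ s * (1 - s) < 1 / 10) ∧
    (1 < s → yminus < 2 / (1 - s) ∧ 2 / (1 - s) < 0 ∧ 0 < yplus) ∧
    (s < 1 → s * (1 - s) < 1 / 10 →
      0 < yminus ∧ yminus < 2 / (1 - s) ∧ 2 / (1 - s) < yplus) := by
  set D : ℝ := Real.sqrt (s ^ 2 * (1 - s) ^ 2 - 10 * (s * (1 - s)) + 1) with hDdef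
  set yminus : ℝ := 2 * (1 / (1 - s) + s) - 2 / |1 - s| * D with hm
  set yplus : ℝ := 2 * (1 / (1 - s) + s) + 2 / |1 - s| * D with hp
  have hne : (1:ℝ) - s ≠ 0 := sub_ne_zero.mpr (Ne.symm hs1)
  have h16 : 0 < 16 / (1 - s) ^ 2 := by positivity
  have hr : 0 < s ^ 2 * (1 - s) ^ 2 - 10 * (s * (1 - s)) + 1 := by
    rcases mul_pos_iff.mp hΔ with ⟨_, h⟩ | ⟨h, _⟩
    · exact h
    · linarith
  have hD0 : 0 ≤ D := Real.sqrt_nonneg _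
  have hDpos : 0 < D := Real.sqrt_pos.mpr hr
  have hD2 : D ^ 2 = s ^ 2 * (1 - s) ^ 2 - 10 * (s * (1 - s)) + 1 := Real.sq_sqrt hr.le
  rcases hs1.lt_or_gt with h1 | h1
  · -- s < 1
    have hu : 0 < 1 - s := by linarith
    have habs : |1 - s| = 1 - s := abs_of_pos hu
    have ht : 0 < s * (1 - s) := mul_pos hs0 hu
    have em : yminus * (1 - s) = 2 + 2 * (s * (1 - s)) - 2 * D := by
      rw [hm, habs]; field_simp
    have ep : yplus * (1 - s) = 2 + 2 * (s * (1 - s)) + 2 * D := by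
      rw [hp, habs]; field_simp
    have hiffm : yminus < 2 / (1 - s) ↔ s * (1 - s) < D := by
      rw [lt_div_iff₀ hu, em]
      constructor <;> intro h <;> linarith
    refine ⟨?_, fun h => absurd h (by linarith), ?_⟩
    · rw [hiffm]
      constructor
      · intro h
        nlinarith [mul_pos (sub_pos.mpr h) (by positivity : (0:ℝ) < D + s * (1 - s))]
      · intro h
        nlinarith [sq_nonneg (D - s * (1 - s)), sq_nonneg (D + s * (1 - s))]
    · intro _ ht10
      have hDlt : D < 1 + s * (1 - s) := by
        by_contra h
        push_neg at h
        have h2 := mul_self_le_mul_self (by linarith : (0:ℝ) ≤ 1 + s * (1 - s)) h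
        nlinarith
      have htD : s * (1 - s) < D := by
        by_contra h
        push_neg at h
        have h2 := mul_self_le_mul_self hD0 h
        nlinarith
      refine ⟨?_, hiffm.mpr htD, ?_⟩
      · have hym : 0 < yminus * (1 - s) := by rw [em]; linarith
        rcases mul_pos_iff.mp hym with ⟨h, _⟩ | ⟨_, h⟩
        · exact h
        · linarith
      · rw [div_lt_iff₀ hu]
        have : 2 < yplus * (1 - s) := by rw [ep]; linarith
        linarith
  · -- 1 < s
    have hu : 1 - s < 0 := by linarith
    have habs : |1 - s| = s - 1 := by rw [abs_of_neg hu]; ring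
    have ht : s * (1 - s) < 0 := mul_neg_of_pos_of_neg hs0 hu
    have hne' : s - 1 ≠ 0 := sub_ne_zero.mpr (ne_of_gt h1)
    have em : yminus * (1 - s) = 2 + 2 * (s * (1 - s)) + 2 * D := by
      rw [hm, habs]; field_simp [hne']; ring
    have ep : yplus * (1 - s) = 2 + 2 * (s * (1 - s)) - 2 * D := by
      rw [hp, habs]; field_simp [hne']; ring
    have hmtD : -(s * (1 - s)) < D := by
      by_contra h
      push_neg at h
      have h2 := mul_self_le_mul_self hD0 h
      nlinarith
    have hLm : yminus < 2 / (1 - s) := by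
      rw [lt_div_iff_of_neg hu, em]
      linarith
    have hneg : 2 / (1 - s) < 0 := div_neg_of_pos_of_neg (by norm_num) hu
    have hDgt : 1 + s * (1 - s) < D := by
      rcases le_or_gt (1 + s * (1 - s)) 0 with h | h
      · linarith
      · by_contra hc
        push_neg at hc
        have h2 := mul_self_le_mul_self hD0 hc
        nlinarith
    have hyp : 0 < yplus := by
      have hyn : yplus * (1 - s) < 0 := by rw [ep]; linarith
      rcases mul_neg_iff.mp hyn with ⟨h, h'⟩ | ⟨h, _⟩
      · linarith
      · linarith
    exact ⟨⟨fun _ => by linarith, fun _ => hLm⟩, fun _ => ⟨hLm, hneg, hyp⟩,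
      fun h => absurd h (by linarith)⟩
end
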